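/- Let A be a 3×3 real matrix with rows (a_1,b_1,c_1), (c_2,a_2,b_2), (b_3,c_3,a_3) and all entries nonnegative. The map Φ_A is completely positive if and only if the 3×3 matrix with diagonal entries a_1, a_2, a_3 and all off-diagonal entries equal to −1 is positive semidefinite. -/

import Mathlib

open Matrix
open scoped ComplexOrder

noncomputable section

/-- A map between complex matrix algebras is positive if it maps positive semidefinite
matrices to positive semidefinite matrices. -/
def IsPosMap {m n : ℕ} (Φ : Matrix (Fin m) (Fin m) ℂ → Matrix (Fin n) (Fin n) ℂ) : Prop :=
  ∀ X, X.PosSemidef → (Φ X).PosSemidef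

/-- Blockwise application of a map `Φ : M_m → M_n` to a matrix in `M_k(M_m)`:
`Φ_k (X_{ij}) = (Φ(X_{ij}))`. -/
def blockApply {m n : ℕ} (k : ℕ)
    (Φ : Matrix (Fin m) (Fin m) ℂ → Matrix (Fin n) (Fin n) ℂ)
    (X : Matrix (Fin k × Fin m) (Fin k × Fin m) ℂ) :
    Matrix (Fin k × Fin n) (Fin k × Fin n) ℂ :=
  Matrix.of fun p q => Φ (Matrix.of fun i j => X (p.1, i) (q.1, j)) p.2 q.2

/-- `Φ` is completely positive if it is `k`-positive for every `k`, i.e. the blockwise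
application of `Φ` to `M_k(M_m)` is a positive map for every `k`. -/
def IsCompletelyPositive {m n : ℕ}
    (Φ : Matrix (Fin m) (Fin m) ℂ → Matrix (Fin n) (Fin n) ℂ) : Prop :=
  ∀ k : ℕ, ∀ X : Matrix (Fin k × Fin m) (Fin k × Fin m) ℂ,
    X.PosSemidef → (blockApply k Φ X).PosSemidef

/-- `Φ` is decomposable if it is the sum of a completely positive linear map and a
completely copositive linear map. -/
def IsDecomposable {m n : ℕ}
    (Φ : Matrix (Fin m) (Fin m) ℂ → Matrix (Fin n) (Fin n) ℂ) : Prop :=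
  ∃ Φ₁ Φ₂ : Matrix (Fin m) (Fin m) ℂ → Matrix (Fin n) (Fin n) ℂ,
    IsLinearMap ℂ Φ₁ ∧ IsLinearMap ℂ Φ₂ ∧
    IsCompletelyPositive Φ₁ ∧ IsCompletelyPositive (fun X => (Φ₂ X)ᵀ) ∧
    ∀ X, Φ X = Φ₁ X + Φ₂ X

/-- The Choi matrix of `Φ`: `C_Φ = (Φ(E_{ij}))_{i,j}` as an element of `M_m ⊗ M_n`. -/
def choiMatrix {m n : ℕ} (Φ : Matrix (Fin m) (Fin m) ℂ → Matrix (Fin n) (Fin n) ℂ) :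
    Matrix (Fin m × Fin n) (Fin m × Fin n) ℂ :=
  Matrix.of fun p q => Φ (Matrix.single p.1 q.1 1) p.2 q.2

/-- The simple tensor `ξ ⊗ η` of two vectors. -/
def tensorVec {m n : ℕ} (ξ : Fin m → ℂ) (η : Fin n → ℂ) : Fin m × Fin n → ℂ :=
  fun p => ξ p.1 * η p.2

/-- The partial transposition `(id ⊗ transpose)` on `M_m ⊗ M_n`. -/
def partialTranspose {m n : ℕ} (ρ : Matrix (Fin m × Fin n) (Fin m × Fin n) ℂ) :
    Matrix (Fin m × Fin n) (Fin m × Fin n) ℂ :=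
  Matrix.of fun p q => ρ (p.1, q.2) (q.1, p.2)

/-- The Choi-like map `Φ_A` associated to a matrix `A` of coefficients: the `i`-th diagonal
entry of `Φ_A(X)` is `∑ k, A i k * x_{kk}` and the off-diagonal entries are `-x_{ij}`. -/
def PhiMap {n : ℕ} (A : Matrix (Fin n) (Fin n) ℝ) (X : Matrix (Fin n) (Fin n) ℂ) :
    Matrix (Fin n) (Fin n) ℂ :=
  Matrix.of fun i j => if i = j then ∑ k, (A i k : ℂ) * X k k else -X i j

/-- The generalized Choi map `Φ_{[a,b,c]}` of Cho, Kye and Lee. -/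
def genChoiMap (a b c : ℝ) : Matrix (Fin 3) (Fin 3) ℂ → Matrix (Fin 3) (Fin 3) ℂ :=
  PhiMap !![a, b, c; c, a, b; b, c, a]

/-- Kye's map `Φ_{[a; c₁, c₂, c₃]}`. -/
def kyeMap (a c₁ c₂ c₃ : ℝ) : Matrix (Fin 3) (Fin 3) ℂ → Matrix (Fin 3) (Fin 3) ℂ :=
  PhiMap !![a, 0, c₁; c₂, a, 0; 0, c₃, a]

/-- The diagonal map `Δ_A(X) = diag(∑_j (a_{ij} + δ_{ij}) x_{jj})_i`. -/
def DeltaMap {n : ℕ} (A : Matrix (Fin n) (Fin n) ℝ) (X : Matrix (Fin n) (Fin n) ℂ) :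
    Matrix (Fin n) (Fin n) ℂ :=
  Matrix.diagonal (fun i => ∑ j, ((A i j : ℂ) + if i = j then 1 else 0) * X j j)

/-- The map `Φ_A(X) = Δ_A(X) - X`. -/
def PhiDelta {n : ℕ} (A : Matrix (Fin n) (Fin n) ℝ) (X : Matrix (Fin n) (Fin n) ℂ) :
    Matrix (Fin n) (Fin n) ℂ :=
  DeltaMap A X - X

/-!
`Φ_A` is the Schur multiplier `X ↦ B ⊙ X` by the matrix `B` with diagonal `a_ii` and off-diagonal
entries `-1`, plus `X ↦ diag(∑_{k ≠ i} a_ik x_kk)`, a nonnegative combination of the conjugations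
`X ↦ E_ik X E_ikᴴ`. A Schur multiplier by a positive semidefinite `B` is completely positive, since
on `M_k(M_n)` it is the Schur multiplier by `J_k ⊗ B` (Schur product theorem). Conversely, the Choi
matrix of a completely positive map is positive semidefinite, and its compression to the indices
`(i, i)` is `B`.
-/

open scoped Kronecker

namespace Matrix

theorem posSemidef_map_ofReal_iff {ι : Type*} [Fintype ι] {B : Matrix ι ι ℝ} :
    (B.map ((↑) : ℝ → ℂ)).PosSemidef ↔ B.PosSemidef := by
  constructor
  · intro h
    refine .of_dotProduct_mulVec_nonneg ?_ fun x => ?_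
    · ext i j
      simpa [conjTranspose_apply] using congr_fun₂ h.isHermitian i j
    · have hx := h.dotProduct_mulVec_nonneg fun i => (x i : ℂ)
      simp only [dotProduct, mulVec, map_apply, Pi.star_apply, Complex.star_def,
        Complex.conj_ofReal, star_trivial] at hx ⊢
      exact_mod_cast hx
  · intro h
    classical
    open scoped MatrixOrder in
    obtain ⟨C, rfl⟩ := CStarAlgebra.nonneg_iff_eq_star_mul_self.mp h.nonneg
    have hC : (star C * C).map ((↑) : ℝ → ℂ) = (C.map (↑))ᴴ * C.map (↑) := by
      rw [← conjTranspose_map _ fun _ => by simp]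
      exact Matrix.map_mul (f := Complex.ofRealHom)
    rw [hC]
    exact posSemidef_conjTranspose_mul_self _

end Matrix

section CompletelyPositive

variable {m n : ℕ}

theorem IsCompletelyPositive.add {Φ Ψ : Matrix (Fin m) (Fin m) ℂ → Matrix (Fin n) (Fin n) ℂ}
    (hΦ : IsCompletelyPositive Φ) (hΨ : IsCompletelyPositive Ψ) :
    IsCompletelyPositive fun X => Φ X + Ψ X :=
  fun k X hX => (hΦ k X hX).add (hΨ k X hX)

theorem IsCompletelyPositive.smul {Φ : Matrix (Fin m) (Fin m) ℂ → Matrix (Fin n) (Fin n) ℂ}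
    (hΦ : IsCompletelyPositive Φ) {c : ℝ} (hc : 0 ≤ c) :
    IsCompletelyPositive fun X => c • Φ X :=
  fun k X hX => (hΦ k X hX).smul hc

theorem blockApply_sum {ι : Type*} (s : Finset ι) (k : ℕ)
    (Φ : ι → Matrix (Fin m) (Fin m) ℂ → Matrix (Fin n) (Fin n) ℂ)
    (X : Matrix (Fin k × Fin m) (Fin k × Fin m) ℂ) :
    blockApply k (fun X => ∑ i ∈ s, Φ i X) X = ∑ i ∈ s, blockApply k (Φ i) X := by
  ext p q
  simp [blockApply, Matrix.sum_apply]

theorem IsCompletelyPositive.sum {ι : Type*} (s : Finset ι)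
    {Φ : ι → Matrix (Fin m) (Fin m) ℂ → Matrix (Fin n) (Fin n) ℂ}
    (hΦ : ∀ i ∈ s, IsCompletelyPositive (Φ i)) :
    IsCompletelyPositive fun X => ∑ i ∈ s, Φ i X := fun k X hX => by
  rw [blockApply_sum]
  exact posSemidef_sum s fun i hi => hΦ i hi k X hX

theorem blockApply_conj (k : ℕ) (V : Matrix (Fin n) (Fin m) ℂ)
    (X : Matrix (Fin k × Fin m) (Fin k × Fin m) ℂ) :
    blockApply k (fun Y : Matrix (Fin m) (Fin m) ℂ => V * Y * Vᴴ) X =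
      ((1 : Matrix (Fin k) (Fin k) ℂ) ⊗ₖ V) * X * ((1 : Matrix (Fin k) (Fin k) ℂ) ⊗ₖ V)ᴴ := by
  ext ⟨p, i⟩ ⟨q, j⟩
  simp [blockApply, mul_apply, one_apply, Fintype.sum_prod_type, ite_mul, mul_ite,
    apply_ite (starRingEnd ℂ)]

theorem isCompletelyPositive_conj (V : Matrix (Fin n) (Fin m) ℂ) :
    IsCompletelyPositive fun X : Matrix (Fin m) (Fin m) ℂ => V * X * Vᴴ := fun k X hX => by
  rw [blockApply_conj]
  exact hX.mul_mul_conjTranspose_same _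

theorem blockApply_hadamard (k : ℕ) (B : Matrix (Fin m) (Fin m) ℂ)
    (X : Matrix (Fin k × Fin m) (Fin k × Fin m) ℂ) :
    blockApply k (B ⊙ ·) X = (of fun _ _ => 1 : Matrix (Fin k) (Fin k) ℂ) ⊗ₖ B ⊙ X := by
  ext p q
  simp [blockApply]

theorem isCompletelyPositive_hadamard {B : Matrix (Fin m) (Fin m) ℂ} (hB : B.PosSemidef) :
    IsCompletelyPositive (B ⊙ ·) := fun k X hX => by
  have hJ : (of fun _ _ => 1 : Matrix (Fin k) (Fin k) ℂ).PosSemidef := by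
    simpa [vecMulVec] using posSemidef_vecMulVec_self_star fun _ : Fin k => (1 : ℂ)
  rw [blockApply_hadamard]
  exact (hJ.kronecker hB).hadamard hX

theorem choiMatrix_eq_blockApply
    (Φ : Matrix (Fin m) (Fin m) ℂ → Matrix (Fin n) (Fin n) ℂ) :
    choiMatrix Φ = blockApply m Φ
      (vecMulVec (fun p : Fin m × Fin m => if p.1 = p.2 then 1 else 0)
        (star fun p : Fin m × Fin m => if p.1 = p.2 then 1 else 0)) := by
  ext p q
  simp only [choiMatrix, blockApply, of_apply]
  congr 2
  ext i j
  simp [vecMulVec_apply, single_apply, ← ite_and, and_comm]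

theorem IsCompletelyPositive.choiMatrix_posSemidef
    {Φ : Matrix (Fin m) (Fin m) ℂ → Matrix (Fin n) (Fin n) ℂ} (hΦ : IsCompletelyPositive Φ) :
    (choiMatrix Φ).PosSemidef := by
  rw [choiMatrix_eq_blockApply]
  exact hΦ m _ (posSemidef_vecMulVec_self_star _)

theorem isCompletelyPositive_diagonal_sum {A : Matrix (Fin n) (Fin n) ℝ}
    (hA : ∀ i j, 0 ≤ A i j) :
    IsCompletelyPositive fun X : Matrix (Fin n) (Fin n) ℂ =>
      diagonal fun i => ∑ k, (A i k : ℂ) * X k k := by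
  have hsum : ∀ X : Matrix (Fin n) (Fin n) ℂ, (diagonal fun i => ∑ k, (A i k : ℂ) * X k k) =
      ∑ p : Fin n × Fin n, A p.1 p.2 • (single p.1 p.2 1 * X * (single p.1 p.2 (1 : ℂ))ᴴ) := by
    intro X
    ext i j
    simp [diagonal_apply, Matrix.sum_apply, single_apply, Fintype.sum_prod_type, ite_and]
  simp_rw [hsum]
  exact IsCompletelyPositive.sum _ fun p _ => (isCompletelyPositive_conj _).smul (hA p.1 p.2)

end CompletelyPositive

section PhiMap

variable {n : ℕ}

def phiSchurMatrix (A : Matrix (Fin n) (Fin n) ℝ) : Matrix (Fin n) (Fin n) ℝ :=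
  of fun i j => if i = j then A i i else -1

theorem choiMatrix_phiMap_submatrix (A : Matrix (Fin n) (Fin n) ℝ) :
    (choiMatrix (PhiMap A)).submatrix (fun i => (i, i)) (fun i => (i, i)) =
      (phiSchurMatrix A).map (↑) := by
  ext i j
  by_cases h : i = j
  · subst h
    simp [choiMatrix, PhiMap, phiSchurMatrix, single_apply]
  · simp [choiMatrix, PhiMap, phiSchurMatrix, single_apply, h]

theorem phiMap_eq_hadamard_add (A : Matrix (Fin n) (Fin n) ℝ)
    (X : Matrix (Fin n) (Fin n) ℂ) :
    PhiMap A X = (phiSchurMatrix A).map (↑) ⊙ X +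
      diagonal fun i => ∑ k, ((A - diagonal A.diag) i k : ℂ) * X k k := by
  ext i j
  by_cases h : i = j
  · subst h
    simp [PhiMap, phiSchurMatrix, diagonal_apply, sub_mul, Finset.sum_sub_distrib,
      apply_ite ((↑) : ℝ → ℂ), ite_mul]
  · simp [PhiMap, phiSchurMatrix, h]

theorem isCompletelyPositive_phiMap_iff {A : Matrix (Fin n) (Fin n) ℝ}
    (hA : ∀ i j, i ≠ j → 0 ≤ A i j) :
    IsCompletelyPositive (PhiMap A) ↔ (phiSchurMatrix A).PosSemidef := by
  refine ⟨fun hΦ => ?_, fun hB => ?_⟩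
  · rw [← posSemidef_map_ofReal_iff, ← choiMatrix_phiMap_submatrix]
    exact hΦ.choiMatrix_posSemidef.submatrix _
  · have hA₀ : ∀ i j, 0 ≤ (A - diagonal A.diag) i j := fun i j => by
      by_cases h : i = j
      · simp [h]
      · simpa [h] using hA i j h
    rw [show PhiMap A = _ from funext (phiMap_eq_hadamard_add A)]
    exact (isCompletelyPositive_hadamard (posSemidef_map_ofReal_iff.mpr hB)).add
      (isCompletelyPositive_diagonal_sum hA₀)

end PhiMap

theorem phiMap_cp_iff_general (a₁ a₂ a₃ b₁ b₂ b₃ c₁ c₂ c₃ : ℝ)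
    (hb₁ : 0 ≤ b₁) (hb₂ : 0 ≤ b₂) (hb₃ : 0 ≤ b₃)
    (hc₁ : 0 ≤ c₁) (hc₂ : 0 ≤ c₂) (hc₃ : 0 ≤ c₃) :
    IsCompletelyPositive (PhiMap !![a₁, b₁, c₁; c₂, a₂, b₂; b₃, c₃, a₃]) ↔
      (!![a₁, -1, -1; -1, a₂, -1; -1, -1, a₃] : Matrix (Fin 3) (Fin 3) ℝ).PosSemidef := by
  have hB : phiSchurMatrix !![a₁, b₁, c₁; c₂, a₂, b₂; b₃, c₃, a₃] =
      !![a₁, -1, -1; -1, a₂, -1; -1, -1, a₃] := by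
    ext i j
    fin_cases i <;> fin_cases j <;> rfl
  rw [isCompletelyPositive_phiMap_iff, hB]
  intro i j hij
  fin_cases i <;> fin_cases j <;> simp_all

/-- `Φ_A` is completely positive iff the matrix with diagonal `a₁,a₂,a₃`
and off-diagonal entries `-1` is positive semidefinite. -/
theorem phiMap_cp_iff (a₁ a₂ a₃ b₁ b₂ b₃ c₁ c₂ c₃ : ℝ)
    (ha₁ : 0 ≤ a₁) (ha₂ : 0 ≤ a₂) (ha₃ : 0 ≤ a₃)
    (hb₁ : 0 ≤ b₁) (hb₂ : 0 ≤ b₂) (hb₃ : 0 ≤ b₃)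
    (hc₁ : 0 ≤ c₁) (hc₂ : 0 ≤ c₂) (hc₃ : 0 ≤ c₃) :
    IsCompletelyPositive (PhiMap !![a₁, b₁, c₁; c₂, a₂, b₂; b₃, c₃, a₃]) ↔
      (!![a₁, -1, -1; -1, a₂, -1; -1, -1, a₃] : Matrix (Fin 3) (Fin 3) ℝ).PosSemidef :=
  phiMap_cp_iff_general a₁ a₂ a₃ b₁ b₂ b₃ c₁ c₂ c₃ hb₁ hb₂ hb₃ hc₁ hc₂ hc₃
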